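/- If F is a concise homogeneous form of degree d in n variables over ℂ that is a direct sum, then the apolar ideal F^⊥ has at least n − 1 minimal generators of degree 2, i.e. dim_ℂ (F^⊥/mF^⊥)_2 ≥ n − 1. -/

import Mathlib

/-!
Apolarity setup.  `S = ℂ[x_1,…,x_n]` and its dual ring `T = ℂ[α_1,…,α_n]` are both
realized as `MvPolynomial (Fin n) ℂ`; the apolarity action `Θ ⌟ F` (`contract Θ F`)
lets `α_i` act as the partial differentiation operator `∂/∂x_i`.
-/

open MvPolynomial

noncomputable section Apolarity

/-- Partial derivatives on `ℂ[x_1,…,x_n]` commute. -/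
lemma pderiv_pderiv_comm (n : ℕ) (i j : Fin n) (f : MvPolynomial (Fin n) ℂ) :
    pderiv i (pderiv j f) = pderiv j (pderiv i f) := by
  induction f using MvPolynomial.induction_on with
  | C a => simp
  | add p q hp hq => simp [hp, hq]
  | mul_X p k hp =>
    rcases eq_or_ne i k with rfl | hik
    · rcases eq_or_ne j i with rfl | hjk
      · rfl
      · simp only [pderiv_mul, pderiv_X_self, pderiv_X_of_ne hjk, pderiv_X_of_ne hjk.symm,
          map_add, map_zero, map_one, Derivation.map_one_eq_zero, mul_one, mul_zero,
          add_zero, zero_add, hp]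
    · rcases eq_or_ne j k with rfl | hjk
      · simp only [pderiv_mul, pderiv_X_self, pderiv_X_of_ne hik, pderiv_X_of_ne hik.symm,
          map_add, map_zero, map_one, Derivation.map_one_eq_zero, mul_one, mul_zero,
          add_zero, zero_add, hp]
      · simp only [pderiv_mul, pderiv_X_of_ne hik.symm, pderiv_X_of_ne hjk.symm, map_add,
          map_zero, mul_zero, add_zero, zero_add, hp]

variable (n : ℕ)

/-- The endomorphism `∂/∂x_i` of `S = ℂ[x_1,…,x_n]`. -/
def derOp (i : Fin n) : Module.End ℂ (MvPolynomial (Fin n) ℂ) :=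
  (pderiv i).toLinearMap

lemma derOp_commute (i j : Fin n) : Commute (derOp n i) (derOp n j) :=
  LinearMap.ext fun f => pderiv_pderiv_comm n i j f

/-- The commuting product of the operators `(∂/∂x_i)^(m i)`. -/
def piDiffHom : (Fin n → Multiplicative ℕ) →* Module.End ℂ (MvPolynomial (Fin n) ℂ) :=
  MonoidHom.noncommPiCoprod (fun i : Fin n => powersHom _ (derOp n i))
    (fun i j _ x y => ((derOp_commute n i j).pow_pow x y))

/-- The differential operator `∏ i, (∂/∂x_i)^(m i)` attached to an exponent vector `m`. -/
def diffMonoidHom : Multiplicative (Fin n →₀ ℕ) →* Module.End ℂ (MvPolynomial (Fin n) ℂ) :=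
  (piDiffHom n).comp
    (AddMonoidHom.toMultiplicative
      (Finsupp.coeFnAddHom : (Fin n →₀ ℕ) →+ (Fin n → ℕ)))

/-- The apolarity action of the dual ring `T = ℂ[α_1,…,α_n]` on `S = ℂ[x_1,…,x_n]`, as an
algebra homomorphism to differential operators: `α_i` acts as `∂/∂x_i`. -/
def apolarAlgHom :
    MvPolynomial (Fin n) ℂ →ₐ[ℂ] Module.End ℂ (MvPolynomial (Fin n) ℂ) :=
  AddMonoidAlgebra.lift ℂ _ (Fin n →₀ ℕ) (diffMonoidHom n)

variable {n}

/-- The apolarity action `Θ ⌟ F`: apply to `F` the differential operator obtained from `Θ`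
by substituting `∂/∂x_i` for the `i`-th (dual) variable. -/
def contract (Θ F : MvPolynomial (Fin n) ℂ) : MvPolynomial (Fin n) ℂ :=
  apolarAlgHom n Θ F

lemma apolarAlgHom_X (i : Fin n) : apolarAlgHom n (X i) = derOp n i := by
  classical
  have hX : (X i : MvPolynomial (Fin n) ℂ)
      = AddMonoidAlgebra.single (Finsupp.single i 1) (1 : ℂ) := rfl
  rw [hX]
  rw [show apolarAlgHom n (AddMonoidAlgebra.single (Finsupp.single i 1) (1:ℂ))
      = (1:ℂ) • diffMonoidHom n (Multiplicative.ofAdd (Finsupp.single i 1)) from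
    AddMonoidAlgebra.lift_single _ _ _]
  rw [one_smul]
  show piDiffHom n ((AddMonoidHom.toMultiplicative
      (Finsupp.coeFnAddHom : (Fin n →₀ ℕ) →+ (Fin n → ℕ)))
      (Multiplicative.ofAdd (Finsupp.single i 1))) = derOp n i
  have harg : (AddMonoidHom.toMultiplicative
        (Finsupp.coeFnAddHom : (Fin n →₀ ℕ) →+ (Fin n → ℕ)))
        (Multiplicative.ofAdd (Finsupp.single i 1))
      = Pi.mulSingle (M := fun _ : Fin n => Multiplicative ℕ) i (Multiplicative.ofAdd 1) := by
    funext j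
    rcases eq_or_ne j i with rfl | hj
    · show Multiplicative.ofAdd ((Finsupp.single j 1 : Fin n →₀ ℕ) j)
        = Pi.mulSingle (M := fun _ : Fin n => Multiplicative ℕ) j (Multiplicative.ofAdd 1) j
      rw [Finsupp.single_eq_same, Pi.mulSingle_eq_same]
    · show Multiplicative.ofAdd ((Finsupp.single i 1 : Fin n →₀ ℕ) j)
        = Pi.mulSingle (M := fun _ : Fin n => Multiplicative ℕ) i (Multiplicative.ofAdd 1) j
      rw [Finsupp.single_eq_of_ne (by first | exact hj | exact hj.symm), Pi.mulSingle_eq_of_ne hj]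
      exact ofAdd_zero
  refine (congrArg (piDiffHom n) harg).trans ?_
  rw [piDiffHom]
  first
  | (erw [MonoidHom.noncommPiCoprod_mulSingle]; rfl)
  | exact (MonoidHom.noncommPiCoprod_mulSingle _ _ _ _).trans rfl

/-- Sanity check: the dual variable `α_i` acts on `F` as `∂F/∂x_i`. -/
@[simp] lemma contract_X (i : Fin n) (F : MvPolynomial (Fin n) ℂ) :
    contract (X i) F = pderiv i F := by
  rw [contract, apolarAlgHom_X]; rfl

/-- The apolar (annihilator) ideal `F^⊥ = {Θ ∈ T : Θ ⌟ F = 0}` of a polynomial `F`. -/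
def apolarIdeal (F : MvPolynomial (Fin n) ℂ) : Ideal (MvPolynomial (Fin n) ℂ) where
  carrier := {Θ | contract Θ F = 0}
  zero_mem' := by simp [contract]
  add_mem' := by
    intro a b ha hb
    simp only [Set.mem_setOf_eq, contract, map_add, LinearMap.add_apply] at *
    rw [ha, hb, add_zero]
  smul_mem' := by
    intro c x hx
    simp only [Set.mem_setOf_eq, smul_eq_mul, contract, map_mul, Module.End.mul_apply] at *
    rw [hx, map_zero]

@[simp] lemma mem_apolarIdeal {Θ F : MvPolynomial (Fin n) ℂ} :
    Θ ∈ apolarIdeal F ↔ contract Θ F = 0 := Iff.rfl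

variable (n)

/-- The irrelevant maximal ideal `m = ⟨α_1,…,α_n⟩` of `T`. -/
def irrIdeal : Ideal (MvPolynomial (Fin n) ℂ) :=
  Ideal.span (Set.range X)

variable {n}

/-- The homogeneous ideal `I` has a minimal generator of degree `k`, i.e. `(I/mI)_k ≠ 0`:
there is a homogeneous element of `I` of degree `k` not belonging to `m * I`. -/
def HasMinGenOfDegree (I : Ideal (MvPolynomial (Fin n) ℂ)) (k : ℕ) : Prop :=
  ∃ Θ, Θ ∈ I ∧ Θ.IsHomogeneous k ∧ Θ ∉ irrIdeal n * I

/-- The homogeneous ideal `I` has at least `r` minimal generators of degree `k`, i.e.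
`dim_ℂ (I/mI)_k ≥ r`: there are `r` homogeneous degree-`k` elements of `I` that are
linearly independent modulo `m * I`. -/
def MinGensAtLeast (I : Ideal (MvPolynomial (Fin n) ℂ)) (k r : ℕ) : Prop :=
  ∃ Θ : Fin r → MvPolynomial (Fin n) ℂ,
    (∀ i, Θ i ∈ I ∧ (Θ i).IsHomogeneous k) ∧
    ∀ c : Fin r → ℂ, (∑ i, c i • Θ i) ∈ irrIdeal n * I → ∀ i, c i = 0

/-- `F` is an `s`-fold direct sum of degree `d`: `F = F_1 + ⋯ + F_s` where the `F_i` are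
nonzero degree-`d` forms in independent subspaces `V_i` of the space of linear forms with
`V = V_1 ⊕ ⋯ ⊕ V_s` (i.e. in disjoint sets of variables, up to linear change of variables;
`F_i ∈ S^d V_i` is expressed as membership in the subalgebra generated by `V_i`). -/
def IsSFoldDirectSum (F : MvPolynomial (Fin n) ℂ) (d s : ℕ) : Prop :=
  ∃ (V : Fin s → Submodule ℂ (MvPolynomial (Fin n) ℂ))
    (G : Fin s → MvPolynomial (Fin n) ℂ),
    (∀ i, V i ≤ homogeneousSubmodule (Fin n) ℂ 1) ∧
    iSupIndep V ∧
    (⨆ i, V i) = homogeneousSubmodule (Fin n) ℂ 1 ∧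
    (∀ i, G i ≠ 0 ∧ (G i).IsHomogeneous d ∧ G i ∈ Algebra.adjoin ℂ (V i : Set _)) ∧
    F = ∑ i, G i

/-- `F` is a direct sum: `F = F₁ + F₂` with `F₁ ∈ S^d V₁`, `F₂ ∈ S^d V₂` nonzero and
`V = V₁ ⊕ V₂`. -/
def IsDirectSum (F : MvPolynomial (Fin n) ℂ) (d : ℕ) : Prop :=
  IsSFoldDirectSum F d 2

/-- `F` is a limit (as `t → 0`) of `s`-fold direct sums of degree `d`. -/
def IsLimitOfSFoldDirectSums (F : MvPolynomial (Fin n) ℂ) (d s : ℕ) : Prop :=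
  ∃ G : ℂ → MvPolynomial (Fin n) ℂ,
    (∀ t : ℂ, t ≠ 0 → IsSFoldDirectSum (G t) d s) ∧
    ∀ m : Fin n →₀ ℕ,
      Filter.Tendsto (fun t => MvPolynomial.coeff m (G t))
        (nhdsWithin (0 : ℂ) {(0 : ℂ)}ᶜ) (nhds (MvPolynomial.coeff m F))

/-- `F` is a limit of direct sums. -/
def IsLimitOfDirectSums (F : MvPolynomial (Fin n) ℂ) (d : ℕ) : Prop :=
  IsLimitOfSFoldDirectSums F d 2

/-- `F` is concise: `(F^⊥)_1 = 0`, i.e. `F` cannot be written using fewer variables. -/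
def Concise (F : MvPolynomial (Fin n) ℂ) : Prop :=
  ∀ Θ : MvPolynomial (Fin n) ℂ, Θ.IsHomogeneous 1 → contract Θ F = 0 → Θ = 0

end Apolarity

/-!
Write `F = G₀ + G₁`, where `Gᵢ` is a polynomial in the linear forms with coefficient vectors in
`Uᵢ` and `ℂⁿ = U₀ ⊕ U₁`, with `a = dim U₀ ≥ 1`, `b = dim U₁ ≥ 1`. The coordinates of a basis of
`U₀`, extended by zero on `U₁`, give linear forms `ℓᵢ ∈ T` that kill `G₁`, and symmetrically
forms `ℓ'ⱼ` kill `G₀`; contraction with a linear form is a derivation, so this only has to be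
checked on the generators. Hence the `ab ≥ a + b - 1 = n - 1` quadrics `ℓᵢ ℓ'ⱼ` lie in `F^⊥`,
and pairing them against the products of the dual basis vectors shows that they are linearly
independent. Finally `F^⊥` is a homogeneous ideal, so conciseness gives `F^⊥ ⊆ m²`; then
`m F^⊥ ⊆ m³` contains no nonzero quadric, and independence modulo `m F^⊥` is plain linear
independence.
-/

lemma MvPolynomial.pderiv_eq_zero_of_isHomogeneous_zero {σ R : Type*} [CommSemiring R]
    {P : MvPolynomial σ R} (hP : P.IsHomogeneous 0) (i : σ) : pderiv i P = 0 := by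
  rw [← totalDegree_zero_iff_isHomogeneous, totalDegree_eq_zero_iff_eq_C] at hP
  rw [hP, pderiv_C]

lemma MvPolynomial.IsHomogeneous.eq_zero_of_mem_pow_idealOfVars {σ R : Type*} [CommSemiring R]
    {k : ℕ} {P : MvPolynomial σ R} (hP : P.IsHomogeneous k)
    (hmem : P ∈ idealOfVars σ R ^ (k + 1)) : P = 0 := by
  ext x
  rw [coeff_zero]
  rcases eq_or_ne x.degree k with hx | hx
  · exact (mem_pow_idealOfVars_iff' _ P).1 hmem x (by omega)
  · exact hP.coeff_eq_zero hx

lemma Submodule.isCompl_comap_of_injective {R M N : Type*} [Ring R] [AddCommGroup M] [Module R M]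
    [AddCommGroup N] [Module R N] {f : M →ₗ[R] N} (hf : Function.Injective f)
    {p q : Submodule R N} (hpq : Disjoint p q) (hsup : p ⊔ q = LinearMap.range f) :
    IsCompl (p.comap f) (q.comap f) := by
  constructor
  · rw [disjoint_iff, ← Submodule.comap_inf, hpq.eq_bot, Submodule.comap_bot,
      LinearMap.ker_eq_bot.2 hf]
  · rw [codisjoint_iff, ← Submodule.comap_sup_of_injective hf (hsup ▸ le_sup_left)
      (hsup ▸ le_sup_right), hsup]
    exact LinearMap.range_le_iff_comap.1 le_rfl

section

variable {n : ℕ}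

lemma contract_mul (Θ Φ F : MvPolynomial (Fin n) ℂ) :
    contract (Θ * Φ) F = contract Θ (contract Φ F) := by
  simp [contract]

lemma contract_C (c : ℂ) (F : MvPolynomial (Fin n) ℂ) : contract (C c) F = c • F := by
  simp [contract, ← algebraMap_eq, Module.algebraMap_end_apply]

lemma contract_add_right (Θ F G : MvPolynomial (Fin n) ℂ) :
    contract Θ (F + G) = contract Θ F + contract Θ G :=
  map_add _ _ _

lemma contract_smul_left (c : ℂ) (Θ F : MvPolynomial (Fin n) ℂ) :
    contract (c • Θ) F = c • contract Θ F := by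
  simp [contract]

lemma contract_sum_left {ι : Type*} (s : Finset ι) (Θ : ι → MvPolynomial (Fin n) ℂ)
    (F : MvPolynomial (Fin n) ℂ) : contract (∑ i ∈ s, Θ i) F = ∑ i ∈ s, contract (Θ i) F := by
  simp [contract]

lemma contract_X_mul (i : Fin n) (Θ F : MvPolynomial (Fin n) ℂ) :
    contract (X i * Θ) F = pderiv i (contract Θ F) := by
  rw [contract_mul, contract_X]

/-- Euler's identity `∑ X i * ∂Θ/∂X i = e • Θ`, transported through the apolarity action. -/
lemma smul_contract_eq_sum_pderiv {e : ℕ} {Θ : MvPolynomial (Fin n) ℂ} (hΘ : Θ.IsHomogeneous e)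
    (F : MvPolynomial (Fin n) ℂ) :
    (e : ℂ) • contract Θ F = ∑ i, pderiv i (contract (pderiv i Θ) F) := by
  rw [← contract_smul_left, Nat.cast_smul_eq_nsmul, ← hΘ.sum_X_mul_pderiv, contract_sum_left]
  simp only [contract_X_mul]

lemma isHomogeneous_contract {d e : ℕ} {Θ F : MvPolynomial (Fin n) ℂ} (hΘ : Θ.IsHomogeneous e)
    (hF : F.IsHomogeneous d) : (contract Θ F).IsHomogeneous (d - e) := by
  induction e generalizing Θ with
  | zero =>
    rw [← totalDegree_zero_iff_isHomogeneous, totalDegree_eq_zero_iff_eq_C] at hΘ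
    rw [hΘ, contract_C, smul_eq_C_mul]
    exact hF.C_mul _
  | succ e ih =>
    have hsum : ((e + 1 : ℕ) : ℂ) • contract Θ F ∈ homogeneousSubmodule (Fin n) ℂ (d - (e + 1)) :=
      smul_contract_eq_sum_pderiv hΘ F ▸ Submodule.sum_mem _ fun i _ => (ih hΘ.pderiv).pderiv
    rw [Submodule.smul_mem_iff _ (by exact_mod_cast e.succ_ne_zero)] at hsum
    exact hsum

lemma contract_eq_zero_of_lt {d e : ℕ} {Θ F : MvPolynomial (Fin n) ℂ} (hΘ : Θ.IsHomogeneous e)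
    (hF : F.IsHomogeneous d) (hde : d < e) : contract Θ F = 0 := by
  obtain ⟨e, rfl⟩ : ∃ e', e = e' + 1 := ⟨e - 1, by omega⟩
  have h := smul_contract_eq_sum_pderiv hΘ F
  have hconst : ∀ i, (contract (pderiv i Θ) F).IsHomogeneous 0 := fun i => by
    simpa [Nat.sub_eq_zero_of_le (by omega : d ≤ e)] using isHomogeneous_contract hΘ.pderiv hF
  simp only [pderiv_eq_zero_of_isHomogeneous_zero (hconst _), Finset.sum_const_zero] at h
  exact (smul_eq_zero.1 h).resolve_left (by exact_mod_cast e.succ_ne_zero)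

lemma homogeneousComponent_contract {d e : ℕ} {F : MvPolynomial (Fin n) ℂ}
    (hF : F.IsHomogeneous d) (Θ : MvPolynomial (Fin n) ℂ) (hed : e ≤ d) :
    homogeneousComponent (d - e) (contract Θ F) = contract (homogeneousComponent e Θ) F := by
  conv_lhs => rw [← sum_homogeneousComponent Θ, contract_sum_left, map_sum]
  have hterm : ∀ k, homogeneousComponent (d - e) (contract (homogeneousComponent k Θ) F) =
      if k = e then contract (homogeneousComponent e Θ) F else 0 := by
    intro k
    rcases lt_or_ge d k with hdk | hkd
    · rw [contract_eq_zero_of_lt (homogeneousComponent_isHomogeneous k Θ) hF hdk, map_zero,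
        if_neg (by omega)]
    · rw [homogeneousComponent_of_mem
        (isHomogeneous_contract (homogeneousComponent_isHomogeneous k Θ) hF)]
      obtain rfl | hke := eq_or_ne k e
      · simp
      · rw [if_neg (by omega), if_neg hke]
  simp only [hterm, Finset.sum_ite_eq', Finset.mem_range]
  split_ifs with he
  · rfl
  · simp [homogeneousComponent_eq_zero _ _ (by omega : Θ.totalDegree < e), contract]

lemma homogeneousComponent_mem_apolarIdeal {d : ℕ} {F Θ : MvPolynomial (Fin n) ℂ}
    (hF : F.IsHomogeneous d) (hΘ : Θ ∈ apolarIdeal F) (e : ℕ) :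
    homogeneousComponent e Θ ∈ apolarIdeal F := by
  rcases lt_or_ge d e with hde | hed
  · exact contract_eq_zero_of_lt (homogeneousComponent_isHomogeneous e Θ) hF hde
  · rw [mem_apolarIdeal, ← homogeneousComponent_contract hF Θ hed, mem_apolarIdeal.1 hΘ, map_zero]

lemma Concise.not_isHomogeneous_zero {F : MvPolynomial (Fin n) ℂ} (hconc : Concise F)
    (hn : n ≠ 0) : ¬ F.IsHomogeneous 0 := by
  intro hF
  rw [← totalDegree_zero_iff_isHomogeneous, totalDegree_eq_zero_iff_eq_C] at hF
  have hX := hconc (X ⟨0, Nat.pos_of_ne_zero hn⟩) (isHomogeneous_X ℂ _)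
  rw [contract_X, hF, pderiv_C] at hX
  exact X_ne_zero _ (hX rfl)

lemma apolarIdeal_le_irrIdeal_sq {d : ℕ} {F : MvPolynomial (Fin n) ℂ} (hF : F.IsHomogeneous d)
    (hF0 : F ≠ 0) (hconc : Concise F) : apolarIdeal F ≤ irrIdeal n ^ 2 := by
  intro Θ hΘ
  have hlow : ∀ k < 2, homogeneousComponent k Θ = 0 := by
    intro k hk
    have hmem := homogeneousComponent_mem_apolarIdeal hF hΘ k
    interval_cases k
    · rw [homogeneousComponent_zero, mem_apolarIdeal, contract_C,
        smul_eq_zero_iff_left hF0] at hmem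
      rw [homogeneousComponent_zero, hmem, C_0]
    · exact hconc _ (homogeneousComponent_isHomogeneous 1 Θ) hmem
  rw [irrIdeal, ← idealOfVars, mem_pow_idealOfVars_iff']
  intro x hx
  simpa [coeff_homogeneousComponent] using congrArg (coeff x) (hlow x.degree hx)

lemma minGensAtLeast_of_linearIndependent {I : Ideal (MvPolynomial (Fin n) ℂ)} {k r : ℕ}
    (hI : I ≤ irrIdeal n ^ k) (Θ : Fin r → MvPolynomial (Fin n) ℂ)
    (hΘ : ∀ i, Θ i ∈ I ∧ (Θ i).IsHomogeneous k) (hli : LinearIndependent ℂ Θ) :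
    MinGensAtLeast I k r := by
  refine ⟨Θ, hΘ, fun c hc => Fintype.linearIndependent_iff.1 hli c ?_⟩
  have hhom : (∑ i, c i • Θ i).IsHomogeneous k :=
    IsHomogeneous.sum _ _ _ fun i _ => by simpa only [smul_eq_C_mul] using (hΘ i).2.C_mul (c i)
  refine hhom.eq_zero_of_mem_pow_idealOfVars ?_
  rw [pow_succ']
  exact Ideal.mul_mono_right hI hc

lemma linearIndependent_of_contract_eq_ite {κ : Type*} [DecidableEq κ]
    (Θ P : κ → MvPolynomial (Fin n) ℂ) (h : ∀ k l, contract (Θ k) (P l) = if k = l then 1 else 0) :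
    LinearIndependent ℂ Θ := by
  rw [linearIndependent_iff']
  intro s g hg k hk
  have hpair := congrArg (contract · (P k)) hg
  simp only [contract_sum_left, contract_smul_left, h, smul_ite, smul_zero, Finset.sum_ite_eq',
    if_pos hk] at hpair
  simpa [contract] using hpair

noncomputable def linearForm : (Fin n → ℂ) →ₗ[ℂ] MvPolynomial (Fin n) ℂ :=
  Fintype.linearCombination ℂ X

lemma linearForm_apply (w : Fin n → ℂ) : linearForm w = ∑ i, w i • X i :=
  Fintype.linearCombination_apply ..

lemma linearForm_injective : Function.Injective (linearForm (n := n)) :=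
  (linearIndependent_X (R := ℂ) (σ := Fin n)).fintypeLinearCombination_injective

lemma range_linearForm : LinearMap.range linearForm = homogeneousSubmodule (Fin n) ℂ 1 := by
  rw [linearForm, Fintype.range_linearCombination, homogeneousSubmodule_one_eq_span_X]

lemma contract_linearForm (p : Fin n → ℂ) (F : MvPolynomial (Fin n) ℂ) :
    contract (linearForm p) F = ∑ i, p i • pderiv i F := by
  simp [linearForm_apply, contract_sum_left, contract_smul_left]

noncomputable def dualForm (φ : Module.Dual ℂ (Fin n → ℂ)) : MvPolynomial (Fin n) ℂ :=
  linearForm fun i => φ (Pi.single i 1)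

lemma isHomogeneous_dualForm (φ : Module.Dual ℂ (Fin n → ℂ)) : (dualForm φ).IsHomogeneous 1 := by
  rw [← mem_homogeneousSubmodule, ← range_linearForm]
  exact LinearMap.mem_range_self _ _

lemma contract_dualForm_linearForm (φ : Module.Dual ℂ (Fin n → ℂ)) (w : Fin n → ℂ) :
    contract (dualForm φ) (linearForm w) = C (φ w) := by
  have hX : ∀ j, contract (dualForm φ) (X j) = C (φ (Pi.single j 1)) := fun j => by
    simp [dualForm, contract_linearForm, pderiv_X, Pi.single_apply, smul_eq_C_mul]
  conv_rhs => rw [pi_eq_sum_univ' w]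
  simp only [linearForm_apply, contract, map_sum, map_smul] at hX ⊢
  simp [hX, smul_eq_C_mul]

lemma exists_derivation_eq_contract_dualForm (φ : Module.Dual ℂ (Fin n → ℂ)) :
    ∃ D : Derivation ℂ (MvPolynomial (Fin n) ℂ) (MvPolynomial (Fin n) ℂ),
      ∀ F, contract (dualForm φ) F = D F := by
  refine ⟨∑ i, φ (Pi.single i 1) • pderiv i, fun F => ?_⟩
  rw [dualForm, contract_linearForm, ← Derivation.coeFnAddMonoidHom_apply, map_sum]
  simp

lemma contract_dualForm_eq_zero_of_mem_adjoin {φ : Module.Dual ℂ (Fin n → ℂ)}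
    {U : Submodule ℂ (Fin n → ℂ)} (hφ : ∀ w ∈ U, φ w = 0) {G : MvPolynomial (Fin n) ℂ}
    (hG : G ∈ Algebra.adjoin ℂ (U.map linearForm : Set (MvPolynomial (Fin n) ℂ))) :
    contract (dualForm φ) G = 0 := by
  obtain ⟨D, hD⟩ := exists_derivation_eq_contract_dualForm φ
  rw [hD]
  refine D.eqOn_adjoin (D2 := 0) ?_ hG
  rintro _ ⟨w, hw, rfl⟩
  rw [← hD, contract_dualForm_linearForm, hφ w hw, C_0, Derivation.zero_apply]

lemma contract_dualForm_mul_dualForm (φ ψ : Module.Dual ℂ (Fin n → ℂ)) (w z : Fin n → ℂ) :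
    contract (dualForm φ * dualForm ψ) (linearForm w * linearForm z) =
      C (ψ w * φ z + ψ z * φ w) := by
  obtain ⟨D, hD⟩ := exists_derivation_eq_contract_dualForm φ
  obtain ⟨D', hD'⟩ := exists_derivation_eq_contract_dualForm ψ
  have hφ : ∀ w, D (linearForm w) = C (φ w) := fun w => by
    rw [← hD, contract_dualForm_linearForm]
  have hψ : ∀ w, D' (linearForm w) = C (ψ w) := fun w => by
    rw [← hD', contract_dualForm_linearForm]
  have hC : ∀ c, D (C c) = 0 := D.map_algebraMap
  rw [contract_mul, hD', hD, D'.leibniz, hψ, hψ, smul_eq_mul, smul_eq_mul, map_add, D.leibniz,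
    D.leibniz]
  simp only [hφ, hC, smul_eq_mul, map_add, map_mul]
  ring

lemma dualForm_mul_dualForm_mem_apolarIdeal {U₀ U₁ : Submodule ℂ (Fin n → ℂ)}
    {φ ψ : Module.Dual ℂ (Fin n → ℂ)} (hφ : ∀ w ∈ U₁, φ w = 0) (hψ : ∀ w ∈ U₀, ψ w = 0)
    {G₀ G₁ : MvPolynomial (Fin n) ℂ}
    (hG₀ : G₀ ∈ Algebra.adjoin ℂ (U₀.map linearForm : Set (MvPolynomial (Fin n) ℂ)))
    (hG₁ : G₁ ∈ Algebra.adjoin ℂ (U₁.map linearForm : Set (MvPolynomial (Fin n) ℂ))) :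
    dualForm φ * dualForm ψ ∈ apolarIdeal (G₀ + G₁) := by
  rw [mem_apolarIdeal, contract_add_right, contract_mul,
    contract_dualForm_eq_zero_of_mem_adjoin hψ hG₀, mul_comm, contract_mul,
    contract_dualForm_eq_zero_of_mem_adjoin hφ hG₁]
  simp [contract]

lemma exists_quadrics_of_isCompl {U₀ U₁ : Submodule ℂ (Fin n → ℂ)} (h : IsCompl U₀ U₁)
    {G₀ G₁ : MvPolynomial (Fin n) ℂ}
    (hG₀ : G₀ ∈ Algebra.adjoin ℂ (U₀.map linearForm : Set (MvPolynomial (Fin n) ℂ)))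
    (hG₁ : G₁ ∈ Algebra.adjoin ℂ (U₁.map linearForm : Set (MvPolynomial (Fin n) ℂ))) :
    ∃ Θ : Fin (Module.finrank ℂ U₀) × Fin (Module.finrank ℂ U₁) → MvPolynomial (Fin n) ℂ,
      (∀ k, Θ k ∈ apolarIdeal (G₀ + G₁) ∧ (Θ k).IsHomogeneous 2) ∧ LinearIndependent ℂ Θ := by
  let b₀ := Module.finBasis ℂ U₀
  let b₁ := Module.finBasis ℂ U₁
  let φ i := LinearMap.ofIsCompl h (b₀.coord i) 0
  let ψ j := LinearMap.ofIsCompl h 0 (b₁.coord j)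
  have hφ : ∀ i, ∀ w ∈ U₁, φ i w = 0 := fun i w hw => by
    simpa using LinearMap.ofIsCompl_apply_right h (φ := b₀.coord i) (ψ := 0) ⟨w, hw⟩
  have hψ : ∀ j, ∀ w ∈ U₀, ψ j w = 0 := fun j w hw => by
    simpa using LinearMap.ofIsCompl_apply_left h (φ := 0) (ψ := b₁.coord j) ⟨w, hw⟩
  refine ⟨fun k => dualForm (φ k.1) * dualForm (ψ k.2), fun k =>
    ⟨dualForm_mul_dualForm_mem_apolarIdeal (hφ k.1) (hψ k.2) hG₀ hG₁,
      (isHomogeneous_dualForm _).mul (isHomogeneous_dualForm _)⟩, ?_⟩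
  refine linearIndependent_of_contract_eq_ite _
    (fun k => linearForm (b₀ k.1) * linearForm (b₁ k.2)) fun k l => ?_
  rw [contract_dualForm_mul_dualForm, hψ _ _ (b₀ _).2, hφ _ _ (b₁ _).2]
  simp only [φ, ψ, LinearMap.ofIsCompl_apply_left, LinearMap.ofIsCompl_apply_right,
    Module.Basis.coord_apply, Module.Basis.repr_self, Finsupp.single_apply, Prod.ext_iff]
  split_ifs <;> simp_all

lemma IsDirectSum.exists_isCompl {d : ℕ} {F : MvPolynomial (Fin n) ℂ} (hDS : IsDirectSum F d) :
    ∃ (U : Fin 2 → Submodule ℂ (Fin n → ℂ)) (G : Fin 2 → MvPolynomial (Fin n) ℂ),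
      IsCompl (U 0) (U 1) ∧ F = G 0 + G 1 ∧ ∀ i, G i ≠ 0 ∧ (G i).IsHomogeneous d ∧
        G i ∈ Algebra.adjoin ℂ ((U i).map linearForm : Set (MvPolynomial (Fin n) ℂ)) := by
  obtain ⟨V, G, hVL, hindep, hsup, hG, rfl⟩ := hDS
  refine ⟨fun i => (V i).comap linearForm, G, ?_, Fin.sum_univ_two G, fun i => ?_⟩
  · refine Submodule.isCompl_comap_of_injective linearForm_injective
      (hindep.pairwiseDisjoint (by decide)) ?_
    rw [range_linearForm, ← hsup]
    exact le_antisymm (sup_le (le_iSup V 0) (le_iSup V 1))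
      (iSup_le (Fin.forall_fin_two.2 ⟨le_sup_left, le_sup_right⟩))
  · rw [Submodule.map_comap_eq_of_le (range_linearForm ▸ hVL i)]
    exact hG i

lemma finrank_pos_of_mem_adjoin_map_linearForm {d : ℕ} {U : Submodule ℂ (Fin n → ℂ)}
    {G : MvPolynomial (Fin n) ℂ} (hG0 : G ≠ 0) (hG : G.IsHomogeneous d) (hd : d ≠ 0)
    (hGU : G ∈ Algebra.adjoin ℂ (U.map linearForm : Set (MvPolynomial (Fin n) ℂ))) :
    0 < Module.finrank ℂ U := by
  rw [Module.finrank_pos_iff, Submodule.nontrivial_iff_ne_bot]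
  rintro rfl
  rw [Submodule.map_bot, Submodule.bot_coe, Algebra.adjoin_singleton_zero, Algebra.mem_bot] at hGU
  obtain ⟨c, rfl⟩ := hGU
  exact hd (hG.inj_right (isHomogeneous_C _ c) hG0)

end

/-- A concise direct sum in `n` variables has at least `n - 1` quadratic
minimal apolar generators. -/
theorem concise_direct_sum_quadratic_generators
    (n d : ℕ) (F : MvPolynomial (Fin n) ℂ) (hF : F.IsHomogeneous d)
    (hconc : Concise F) (hDS : IsDirectSum F d) :
    MinGensAtLeast (apolarIdeal F) 2 (n - 1) := by
  obtain rfl | hn := eq_or_ne n 0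
  · exact ⟨Fin.elim0, fun i => i.elim0, fun _ _ i => i.elim0⟩
  have hd : d ≠ 0 := by
    rintro rfl
    exact hconc.not_isHomogeneous_zero hn hF
  have hF0 : F ≠ 0 := by
    rintro rfl
    exact hconc.not_isHomogeneous_zero hn (isHomogeneous_zero _ _ 0)
  obtain ⟨U, G, hU, hFG, hG⟩ := hDS.exists_isCompl
  obtain ⟨Θ, hΘ, hli⟩ := exists_quadrics_of_isCompl hU (hG 0).2.2 (hG 1).2.2
  have ha := finrank_pos_of_mem_adjoin_map_linearForm (hG 0).1 (hG 0).2.1 hd (hG 0).2.2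
  have hb := finrank_pos_of_mem_adjoin_map_linearForm (hG 1).1 (hG 1).2.1 hd (hG 1).2.2
  have hab := Submodule.finrank_add_eq_of_isCompl hU
  rw [Module.finrank_fin_fun] at hab
  have hcount : n - 1 ≤ Module.finrank ℂ (U 0) * Module.finrank ℂ (U 1) := by
    have := Nat.add_sub_one_le_mul ha.ne' hb.ne'
    omega
  let e := (Fin.castLEEmb hcount).trans finProdFinEquiv.symm.toEmbedding
  subst hFG
  exact minGensAtLeast_of_linearIndependent (apolarIdeal_le_irrIdeal_sq hF hF0 hconc) (Θ ∘ e)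
    (fun k => hΘ (e k)) (hli.comp e e.injective)
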